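/- arXiv:2510.18792 — 6 statements merged into one kernel-verified Lean document; each statement's English description precedes it below -/
import Mathlib

section
/- Let 0 < p < 1/2 and let (X_t) be the p-biased nearest-neighbor random walk on ℤ started at n ∈ ℤ (steps are i.i.d., equal to −1 with probability p and +1 with probability 1−p). Let τ = inf{t ≥ 1 : X_t = n−1} be the first hitting time of n−1. Then for every integer m ≥ 1, the conditional probability P(τ ≥ 2m+1 | τ < ∞) is at most exp(−3(1−2p)² m / (2(1+4p))). -/
/-!
Because the walk moves by `±1`, the event `τ = T` says exactly that the first `T` steps form a
first-passage path: a Dyck word followed by a down-step. Hence `τ` is odd and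
`P(τ = 2k+1) = C_k p^(k+1) (1-p)^k`, where `C_k` is the `k`-th Catalan number. Since
`C_(k+m) ≤ 4^m C_k`, each term of `P(2m < τ < ∞) = ∑_k P(τ = 2k + 2m + 1)` is at most
`(4p(1-p))^m` times the corresponding term of `P(τ < ∞) = ∑_k P(τ = 2k + 1)`. Finally
`4p(1-p) ≤ (1 - c/4)^4 ≤ exp(-c)` for `c = 3(1-2p)²/(2(1+4p))`.
-/

open MeasureTheory ProbabilityTheory DyckStep
open scoped ENNReal

lemma catalan_succ_le_four_mul (n : ℕ) : catalan (n + 1) ≤ 4 * catalan n := by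
  have key : (n + 2) * catalan (n + 1) = 2 * (2 * n + 1) * catalan n := by
    apply Nat.eq_of_mul_eq_mul_left (Nat.succ_pos n)
    calc (n + 1) * ((n + 2) * catalan (n + 1)) = (n + 1) * (n + 1).centralBinom := by
          rw [← succ_mul_catalan_eq_centralBinom (n + 1)]
      _ = (n + 1) * (2 * (2 * n + 1) * catalan n) := by
          rw [Nat.succ_mul_centralBinom_succ, ← succ_mul_catalan_eq_centralBinom n]; ring
  nlinarith

lemma catalan_add_le (n m : ℕ) : catalan (n + m) ≤ 4 ^ m * catalan n := by
  induction m with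
  | zero => simp
  | succ m ih =>
    calc catalan (n + m + 1) ≤ 4 * catalan (n + m) := catalan_succ_le_four_mul _
      _ ≤ 4 ^ (m + 1) * catalan n := by rw [pow_succ', mul_assoc]; exact Nat.mul_le_mul_left 4 ih

namespace DyckStep

def toInt : DyckStep → ℤ
  | U => 1
  | D => -1

def ofInt (z : ℤ) : DyckStep := if z = 1 then U else D

lemma ofInt_eq_iff {z : ℤ} (hz : z = 1 ∨ z = -1) {a : DyckStep} : ofInt z = a ↔ z = a.toInt := by
  rcases hz with rfl | rfl <;> cases a <;> simp [ofInt, toInt]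

instance : Fintype DyckStep := ⟨{U, D}, fun s => by cases s <;> simp⟩

instance : MeasurableSpace DyckStep := ⊤

instance : DiscreteMeasurableSpace DyckStep := ⟨fun _ => trivial⟩

end DyckStep

namespace BiasedWalk

open List Finset

def height (l : List DyckStep) : ℤ := l.count U - l.count D

@[simp] lemma height_append_singleton (l : List DyckStep) (a : DyckStep) :
    height (l ++ [a]) = height l + a.toInt := by
  cases a <;> simp [height, count_append, toInt] <;> ring

lemma count_U_add_count_D (l : List DyckStep) : l.count U + l.count D = l.length := by
  induction l with
  | nil => rfl
  | cons a l ih => cases a <;> simp <;> omega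

/-- The steps of a walk from `0` that first reaches `-1` at the last step. -/
def IsFirstPassage (l : List DyckStep) : Prop :=
  height l = -1 ∧ ∀ i < l.length, 0 ≤ height (l.take i)

instance : DecidablePred IsFirstPassage := fun _ => inferInstanceAs (Decidable (_ ∧ _))

lemma IsFirstPassage.count_D {l : List DyckStep} (h : IsFirstPassage l) :
    l.count D = l.count U + 1 := by
  have := h.1
  simp only [height] at this
  omega

lemma IsFirstPassage.length_eq {l : List DyckStep} (h : IsFirstPassage l) :
    l.length = 2 * l.count U + 1 := by
  have := count_U_add_count_D l
  have := h.count_D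
  omega

lemma IsFirstPassage.dropLast_append_D {l : List DyckStep} (h : IsFirstPassage l) :
    l.dropLast ++ [D] = l ∧ height l.dropLast = 0 := by
  have hl : l ≠ [] := by rintro rfl; simp [IsFirstPassage, height] at h
  have hsplit := dropLast_append_getLast hl
  have hnonneg : 0 ≤ height l.dropLast := by
    rw [dropLast_eq_take]; exact h.2 _ (by simp [length_pos_iff.2 hl])
  have hsum := h.1
  rw [← hsplit, height_append_singleton] at hsum
  cases hlast : l.getLast hl
  · rw [hlast] at hsum; simp [toInt] at hsum; omega
  · rw [hlast] at hsum hsplit; simp [toInt] at hsum; exact ⟨hsplit, by omega⟩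

def IsFirstPassage.toDyckWord {l : List DyckStep} (h : IsFirstPassage l) : DyckWord where
  toList := l.dropLast
  count_U_eq_count_D := by
    have := h.dropLast_append_D.2
    simp only [height] at this
    omega
  count_D_le_count_U i := by
    have := h.2 (min i (l.length - 1)) (by have := h.length_eq; omega)
    rw [dropLast_eq_take, take_take]
    simp only [height] at this
    omega

@[simp] lemma IsFirstPassage.toList_toDyckWord {l : List DyckStep} (h : IsFirstPassage l) :
    h.toDyckWord.toList = l.dropLast := rfl

lemma isFirstPassage_append_D (d : DyckWord) : IsFirstPassage (d.toList ++ [D]) := by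
  refine ⟨?_, fun i hi => ?_⟩
  · simp [height, d.count_U_eq_count_D]
  · rw [take_append_of_le_length (by simp at hi; omega)]
    have := d.count_D_le_count_U i
    simp only [height]
    omega

def firstPassagePaths (T : ℕ) : Finset (Fin T → DyckStep) := {b | IsFirstPassage (ofFn b)}

lemma ofFn_getElem_of_length_eq {α : Type*} {n : ℕ} {l : List α} (hl : l.length = n) :
    ofFn (fun i : Fin n => l[i.1]) = l := by
  subst hl; exact ofFn_getElem

def firstPassagePathsEquivDyckWord (k : ℕ) :
    firstPassagePaths (2 * k + 1) ≃ {d : DyckWord // d.semilength = k} where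
  toFun b := ⟨(Finset.mem_filter.1 b.2).2.toDyckWord, by
    have := (Finset.mem_filter.1 b.2).2.toDyckWord.two_mul_semilength_eq_length
    simp only [IsFirstPassage.toList_toDyckWord, length_dropLast, length_ofFn] at this
    omega⟩
  invFun d := ⟨fun i => (d.1.toList ++ [D])[i.1]'(by
    have := d.1.two_mul_semilength_eq_length; simp [d.2] at *; omega), by
    have := d.1.two_mul_semilength_eq_length
    simp only [firstPassagePaths, Finset.mem_filter, Finset.mem_univ, true_and]
    rw [ofFn_getElem_of_length_eq (by simp; omega)]
    exact isFirstPassage_append_D d.1⟩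
  left_inv b := by
    have h := (Finset.mem_filter.1 b.2).2
    ext i
    simp only [IsFirstPassage.toList_toDyckWord, h.dropLast_append_D.1, List.getElem_ofFn]
  right_inv d := by
    have := d.1.two_mul_semilength_eq_length
    ext1; ext1
    rw [IsFirstPassage.toList_toDyckWord, ofFn_getElem_of_length_eq (by simp; omega),
      dropLast_concat]

lemma card_firstPassagePaths (k : ℕ) : #(firstPassagePaths (2 * k + 1)) = catalan k := by
  rw [← DyckWord.card_dyckWord_semilength_eq_catalan, ← Fintype.card_coe]
  exact Fintype.card_congr (firstPassagePathsEquivDyckWord k)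

def signWalk (c : ℕ → DyckStep) (t : ℕ) : ℤ := ∑ i ∈ range t, (c i).toInt

lemma signWalk_zero (c : ℕ → DyckStep) : signWalk c 0 = 0 := rfl

lemma signWalk_succ (c : ℕ → DyckStep) (t : ℕ) :
    signWalk c (t + 1) = signWalk c t + (c t).toInt :=
  Finset.sum_range_succ _ _

lemma signWalk_eq_height (c : ℕ → DyckStep) (t : ℕ) :
    signWalk c t = height (ofFn fun i : Fin t => c i) := by
  induction t with
  | zero => rfl
  | succ t ih => rw [signWalk_succ, ih, ofFn_succ_last]; simp

lemma take_ofFn {α : Type*} (c : ℕ → α) {t T : ℕ} (h : t ≤ T) :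
    (ofFn fun i : Fin T => c i).take t = ofFn fun i : Fin t => c i := by
  apply ext_getElem <;> simp [h]

lemma signWalk_nonneg {c : ℕ → DyckStep} {T : ℕ}
    (h : ∀ t, 1 ≤ t → t < T → signWalk c t ≠ -1) : ∀ t < T, 0 ≤ signWalk c t := by
  intro t
  induction t with
  | zero => simp [signWalk_zero]
  | succ t ih =>
    intro ht
    have := h (t + 1) (by omega) ht
    have := ih (by omega)
    rcases (c t).dichotomy with hc | hc <;> simp only [signWalk_succ, hc, toInt] at * <;> omega

lemma isFirstPassage_ofFn_iff {c : ℕ → DyckStep} {T : ℕ} :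
    IsFirstPassage (ofFn fun i : Fin T => c i) ↔
      signWalk c T = -1 ∧ ∀ t, 1 ≤ t → t < T → signWalk c t ≠ -1 := by
  have hprefix : ∀ t ≤ T, height ((ofFn fun i : Fin T => c i).take t) = signWalk c t := by
    intro t ht; rw [take_ofFn c ht, signWalk_eq_height]
  simp only [IsFirstPassage, length_ofFn, ← signWalk_eq_height]
  refine ⟨fun h => ⟨h.1, fun t _ htT => ?_⟩, fun h => ⟨h.1, fun t htT => ?_⟩⟩
  · have := h.2 t htT; rw [hprefix t htT.le] at this; omega
  · rw [hprefix t htT.le]; exact signWalk_nonneg h.2 t htT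

lemma eq_of_isFirstPassage_ofFn {c : ℕ → DyckStep} {T T' : ℕ}
    (h : IsFirstPassage (ofFn fun i : Fin T => c i))
    (h' : IsFirstPassage (ofFn fun i : Fin T' => c i)) : T = T' := by
  rw [isFirstPassage_ofFn_iff] at h h'
  have hT : T ≠ 0 := by rintro rfl; simp [signWalk_zero] at h
  have hT' : T' ≠ 0 := by rintro rfl; simp [signWalk_zero] at h'
  by_contra hne
  rcases Nat.lt_or_gt_of_ne hne with hlt | hlt
  · exact h'.2 T (by omega) hlt h.1
  · exact h.2 T' (by omega) hlt h'.1

lemma hitsAfter_iff_exists_isFirstPassage (c : ℕ → DyckStep) (N : ℕ) :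
    ((∃ t, 1 ≤ t ∧ signWalk c t = -1) ∧ ∀ t, 1 ≤ t → t ≤ N → signWalk c t ≠ -1) ↔
      ∃ T, IsFirstPassage (ofFn fun i : Fin (T + N + 1) => c i) := by
  simp only [isFirstPassage_ofFn_iff]
  constructor
  · rintro ⟨hhit, hlate⟩
    classical
    obtain ⟨⟨h1, hfirst⟩, hmin⟩ := (Nat.find_eq_iff hhit).1 rfl
    obtain ⟨T, hT⟩ : ∃ T, Nat.find hhit = T + N + 1 :=
      ⟨Nat.find hhit - N - 1, by have := hlate _ h1; omega⟩
    rw [hT] at hfirst hmin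
    exact ⟨T, hfirst, fun t ht htT hwalk => hmin t htT ⟨ht, hwalk⟩⟩
  · rintro ⟨T, hfirst, hbefore⟩
    exact ⟨⟨_, by omega, hfirst⟩, fun t ht htN => hbefore t ht (by omega)⟩

lemma prod_map_eq_pow_count {M : Type*} [CommMonoid M] (w : DyckStep → M) (l : List DyckStep) :
    (l.map w).prod = w U ^ l.count U * w D ^ l.count D := by
  induction l with
  | nil => simp
  | cons a l ih => cases a <;> simp [ih, pow_succ] <;> ac_rfl

section
variable {Ω : Type*} {s : ℕ → Ω → DyckStep}

lemma hitsAfter_eq_iUnion (N : ℕ) :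
    {ω | (∃ t, 1 ≤ t ∧ signWalk (s · ω) t = -1) ∧ ∀ t, 1 ≤ t → t ≤ N → signWalk (s · ω) t ≠ -1} =
      ⋃ T, {ω | IsFirstPassage (ofFn fun i : Fin (T + N + 1) => s i ω)} := by
  ext ω
  simp only [Set.mem_iUnion]
  exact hitsAfter_iff_exists_isFirstPassage (s · ω) N

variable [MeasurableSpace Ω] {μ : Measure Ω} {w : DyckStep → ℝ≥0∞}

lemma measurableSet_isFirstPassage (hsm : ∀ i, Measurable (s i)) (T : ℕ) :
    MeasurableSet {ω | IsFirstPassage (ofFn fun i : Fin T => s i ω)} :=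
  show MeasurableSet ((fun ω (i : Fin T) => s i ω) ⁻¹' {b | IsFirstPassage (ofFn b)}) from
    measurable_pi_lambda (fun ω (i : Fin T) => s i ω) (fun i => hsm i)
      (Set.toFinite _).measurableSet

lemma measure_steps_eq (hs : iIndepFun s μ) (hw : ∀ i a, μ (s i ⁻¹' {a}) = w a) {T : ℕ}
    (b : Fin T → DyckStep) :
    μ ((fun ω (i : Fin T) => s i ω) ⁻¹' {b}) =
      w U ^ (ofFn b).count U * w D ^ (ofFn b).count D := by
  have hinter : (fun ω (i : Fin T) => s i ω) ⁻¹' {b} = ⋂ i ∈ (univ : Finset (Fin T)),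
      s i ⁻¹' {b i} := by
    ext; simp [funext_iff]
  rw [hinter, (hs.precomp Fin.val_injective).measure_inter_preimage_eq_mul _
    (fun _ _ => measurableSet_singleton _)]
  simp only [hw]
  rw [← List.prod_ofFn, show (ofFn fun i => w (b i)) = (ofFn b).map w from map_ofFn.symm,
    prod_map_eq_pow_count]

lemma measure_isFirstPassage_eq (hsm : ∀ i, Measurable (s i)) (hs : iIndepFun s μ)
    (hw : ∀ i a, μ (s i ⁻¹' {a}) = w a) (k : ℕ) :
    μ {ω | IsFirstPassage (ofFn fun i : Fin (2 * k + 1) => s i ω)} =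
      catalan k * (w U ^ k * w D ^ (k + 1)) := by
  have hV : Measurable fun ω (i : Fin (2 * k + 1)) => s i ω :=
    measurable_pi_lambda _ fun i => hsm i
  have hset : {ω | IsFirstPassage (ofFn fun i : Fin (2 * k + 1) => s i ω)} =
      (fun ω (i : Fin (2 * k + 1)) => s i ω) ⁻¹' ↑(firstPassagePaths (2 * k + 1)) := by
    ext; simp [firstPassagePaths]
  have hweight : ∀ b ∈ firstPassagePaths (2 * k + 1),
      μ ((fun ω (i : Fin (2 * k + 1)) => s i ω) ⁻¹' {b}) = w U ^ k * w D ^ (k + 1) := by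
    intro b hb
    have h := (Finset.mem_filter.1 hb).2
    have hlen := h.length_eq
    rw [length_ofFn] at hlen
    rw [measure_steps_eq hs hw, h.count_D, show (ofFn b).count U = k by omega]
  rw [hset, ← sum_measure_preimage_singleton _ fun _ _ => hV (measurableSet_singleton _),
    Finset.sum_congr rfl hweight, Finset.sum_const, card_firstPassagePaths, nsmul_eq_mul]

lemma measure_isFirstPassage_add_le (hsm : ∀ i, Measurable (s i)) (hs : iIndepFun s μ)
    (hw : ∀ i a, μ (s i ⁻¹' {a}) = w a) (T m : ℕ) :
    μ {ω | IsFirstPassage (ofFn fun i : Fin (T + 2 * m) => s i ω)} ≤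
      (4 * w U * w D) ^ m * μ {ω | IsFirstPassage (ofFn fun i : Fin T => s i ω)} := by
  obtain ⟨k, rfl | rfl⟩ := Nat.even_or_odd' T
  · have hempty : {ω | IsFirstPassage (ofFn fun i : Fin (2 * k + 2 * m) => s i ω)} = ∅ :=
      Set.eq_empty_of_forall_notMem fun ω h => by
        have := IsFirstPassage.length_eq h
        rw [length_ofFn] at this
        omega
    simp [hempty]
  · rw [show 2 * k + 1 + 2 * m = 2 * (k + m) + 1 by ring, measure_isFirstPassage_eq hsm hs hw,
      measure_isFirstPassage_eq hsm hs hw]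
    have hcat : (catalan (k + m) : ℝ≥0∞) ≤ 4 ^ m * catalan k := by
      exact_mod_cast catalan_add_le k m
    calc (catalan (k + m) : ℝ≥0∞) * (w U ^ (k + m) * w D ^ (k + m + 1))
        ≤ 4 ^ m * catalan k * (w U ^ (k + m) * w D ^ (k + m + 1)) := by gcongr
      _ = (4 * w U * w D) ^ m * (catalan k * (w U ^ k * w D ^ (k + 1))) := by ring

lemma measure_hitsAfter_eq (hsm : ∀ i, Measurable (s i)) (N : ℕ) :
    μ {ω | (∃ t, 1 ≤ t ∧ signWalk (s · ω) t = -1) ∧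
        ∀ t, 1 ≤ t → t ≤ N → signWalk (s · ω) t ≠ -1} =
      ∑' T, μ {ω | IsFirstPassage (ofFn fun i : Fin (T + N + 1) => s i ω)} := by
  rw [hitsAfter_eq_iUnion]
  refine measure_iUnion (fun T T' hne => Set.disjoint_left.2 fun ω h h' => hne ?_)
    fun T => measurableSet_isFirstPassage hsm _
  have := eq_of_isFirstPassage_ofFn (c := (s · ω)) h h'
  omega

theorem cond_noHit_le [IsFiniteMeasure μ] (hsm : ∀ i, Measurable (s i)) (hs : iIndepFun s μ)
    (hw : ∀ i a, μ (s i ⁻¹' {a}) = w a) (m : ℕ) :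
    μ[{ω | ∀ t, 1 ≤ t → t ≤ 2 * m → signWalk (s · ω) t ≠ -1} |
        {ω | ∃ t, 1 ≤ t ∧ signWalk (s · ω) t = -1}] ≤ (4 * w U * w D) ^ m := by
  set A := {ω | ∃ t, 1 ≤ t ∧ signWalk (s · ω) t = -1}
  set B := {ω | ∀ t, 1 ≤ t → t ≤ 2 * m → signWalk (s · ω) t ≠ -1}
  have hA : A = {ω | (∃ t, 1 ≤ t ∧ signWalk (s · ω) t = -1) ∧
      ∀ t, 1 ≤ t → t ≤ 0 → signWalk (s · ω) t ≠ -1} :=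
    Set.ext fun ω => (and_iff_left fun t h1 h0 => absurd h0 (by omega)).symm
  have hAB : A ∩ B = {ω | (∃ t, 1 ≤ t ∧ signWalk (s · ω) t = -1) ∧
      ∀ t, 1 ≤ t → t ≤ 2 * m → signWalk (s · ω) t ≠ -1} := rfl
  have hAmeas : MeasurableSet A := by
    rw [hA, hitsAfter_eq_iUnion]
    exact .iUnion fun T => measurableSet_isFirstPassage hsm _
  have hle : μ (A ∩ B) ≤ (4 * w U * w D) ^ m * μ A := by
    rw [hAB, measure_hitsAfter_eq hsm, hA, measure_hitsAfter_eq hsm, ← ENNReal.tsum_mul_left]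
    refine ENNReal.tsum_le_tsum fun T => ?_
    have := measure_isFirstPassage_add_le hsm hs hw (T + 0 + 1) m
    rwa [show T + 0 + 1 + 2 * m = T + 2 * m + 1 by ring] at this
  rw [cond_apply hAmeas]
  rcases eq_or_ne (μ A) 0 with h0 | h0
  · simp [measure_mono_null Set.inter_subset_left h0]
  · exact (ENNReal.inv_mul_le_iff h0 (measure_ne_top μ A)).2 (by rw [mul_comm (μ A)]; exact hle)

end

end BiasedWalk

section
variable {Ω : Type*} [MeasurableSpace Ω] {μ : Measure Ω}

lemma cond_congr_ae {s s' t t' : Set Ω} (hs : s =ᵐ[μ] s') (ht : t =ᵐ[μ] t') :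
    μ[t | s] = μ[t' | s'] := by
  rw [ProbabilityTheory.cond, measure_congr hs, Measure.restrict_congr_set hs,
    ← ProbabilityTheory.cond]
  exact measure_congr (cond_absolutelyContinuous.ae_le ht)

lemma ae_eq_one_or_eq_neg_one [IsProbabilityMeasure μ] {f : Ω → ℤ} (hf : Measurable f) {p : ℝ}
    (hp0 : 0 ≤ p) (hp1 : p ≤ 1) (hneg : μ {ω | f ω = -1} = ENNReal.ofReal p)
    (hpos : μ {ω | f ω = 1} = ENNReal.ofReal (1 - p)) :
    ∀ᵐ ω ∂μ, f ω = 1 ∨ f ω = -1 := by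
  have hmeas (z : ℤ) : MeasurableSet {ω | f ω = z} := hf (measurableSet_singleton z)
  have hdisj : Disjoint {ω | f ω = 1} {ω | f ω = -1} :=
    Set.disjoint_left.2 fun ω (h : f ω = 1) (h' : f ω = -1) => by omega
  have hunion : μ ({ω | f ω = 1} ∪ {ω | f ω = -1}) = 1 := by
    rw [measure_union hdisj (hmeas (-1)), hneg, hpos, ← ENNReal.ofReal_add (by linarith) hp0]
    simp
  exact (prob_compl_eq_zero_iff ((hmeas 1).union (hmeas (-1)))).2 hunion

lemma measure_ofInt_preimage {f : Ω → ℤ} (hf : ∀ᵐ ω ∂μ, f ω = 1 ∨ f ω = -1) (a : DyckStep) :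
    μ ((ofInt ∘ f) ⁻¹' {a}) = μ {ω | f ω = a.toInt} :=
  measure_congr (Filter.eventuallyEq_set.2 (hf.mono fun _ hω => ofInt_eq_iff hω))

end

section
open Real

lemma four_mul_mul_one_sub_le_exp {p : ℝ} (hp0 : 0 ≤ p) (hp1 : p ≤ 1 / 2) :
    4 * p * (1 - p) ≤ exp (-(3 * (1 - 2 * p) ^ 2) / (2 * (1 + 4 * p))) := by
  set c := 3 * (1 - 2 * p) ^ 2 / (2 * (1 + 4 * p)) with hc_def
  have hc : c ≤ 4 := by
    rw [div_le_iff₀ (by linarith)]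
    nlinarith
  have hpoly : 4 * p * (1 - p) * (8 * (1 + 4 * p)) ^ 4 ≤
      (8 * (1 + 4 * p) - 3 * (1 - 2 * p) ^ 2) ^ 4 := by
    nlinarith [sq_nonneg (1 - 2 * p), sq_nonneg p, sq_nonneg ((1 - 2 * p) ^ 2),
      mul_nonneg hp0 (by linarith : (0 : ℝ) ≤ 1 - 2 * p),
      sq_nonneg ((1 - 2 * p) * (3 - 4 * (1 - 2 * p))),
      sq_nonneg ((1 - 2 * p) ^ 2 * (3 - 4 * (1 - 2 * p)))]
  calc 4 * p * (1 - p) ≤ (1 - c / 4) ^ 4 := by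
        rw [show 1 - c / 4 = (8 * (1 + 4 * p) - 3 * (1 - 2 * p) ^ 2) / (8 * (1 + 4 * p)) by
          rw [hc_def]; field_simp; ring, div_pow, le_div_iff₀ (by positivity)]
        exact hpoly
    _ ≤ exp (-c) := by exact_mod_cast one_sub_div_pow_le_exp_neg (n := 4) (by exact_mod_cast hc)
    _ = exp (-(3 * (1 - 2 * p) ^ 2) / (2 * (1 + 4 * p))) := by rw [neg_div]

lemma four_mul_mul_one_sub_pow_le_exp {p : ℝ} (hp0 : 0 ≤ p) (hp1 : p ≤ 1 / 2) (m : ℕ) :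
    (4 * p * (1 - p)) ^ m ≤ exp (-(3 * (1 - 2 * p) ^ 2 * m) / (2 * (1 + 4 * p))) :=
  calc (4 * p * (1 - p)) ^ m ≤ exp (-(3 * (1 - 2 * p) ^ 2) / (2 * (1 + 4 * p))) ^ m :=
        pow_le_pow_left₀ (by nlinarith) (four_mul_mul_one_sub_le_exp hp0 hp1) m
    _ = exp (-(3 * (1 - 2 * p) ^ 2 * m) / (2 * (1 + 4 * p))) := by rw [← exp_nat_mul]; ring_nf

end

open BiasedWalk

theorem stmt0_general
    {Ω : Type*} [MeasurableSpace Ω] (μ : Measure Ω) [IsProbabilityMeasure μ]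
    (p : ℝ) (hp0 : 0 < p) (hp1 : p < 1 / 2)
    (ξ : ℕ → Ω → ℤ)
    (hmeas : ∀ i, Measurable (ξ i))
    (hindep : iIndepFun ξ μ)
    (hneg : ∀ i, μ {ω | ξ i ω = -1} = ENNReal.ofReal p)
    (hpos : ∀ i, μ {ω | ξ i ω = 1} = ENNReal.ofReal (1 - p))
    (n : ℤ)
    (X : ℕ → Ω → ℤ)
    (hX : ∀ t ω, X t ω = n + ∑ i ∈ Finset.range t, ξ i ω)
    (m : ℕ) :
    μ[|{ω | ∃ t, 1 ≤ t ∧ X t ω = n - 1}]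
        {ω | ∀ t, 1 ≤ t → t ≤ 2 * m → X t ω ≠ n - 1}
      ≤ ENNReal.ofReal (Real.exp (-(3 * (1 - 2 * p) ^ 2 * m) / (2 * (1 + 4 * p)))) := by
  -- `ξ` is `±1` only almost surely, so the walk is rebuilt from the signs of its steps.
  set s : ℕ → Ω → DyckStep := fun i => ofInt ∘ ξ i
  set w : DyckStep → ℝ≥0∞ := fun a => μ {ω | ξ 0 ω = a.toInt}
  have hsign (i : ℕ) : ∀ᵐ ω ∂μ, ξ i ω = 1 ∨ ξ i ω = -1 :=
    ae_eq_one_or_eq_neg_one (hmeas i) hp0.le (by linarith) (hneg i) (hpos i)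
  have hw (i : ℕ) (a : DyckStep) : μ (s i ⁻¹' {a}) = w a := by
    rw [measure_ofInt_preimage (hsign i)]
    cases a <;> simp only [w, toInt, hneg, hpos]
  have hwalk : ∀ᵐ ω ∂μ, ∀ t, X t ω = n + signWalk (s · ω) t := by
    filter_upwards [ae_all_iff.2 hsign] with ω hω t
    rw [hX, signWalk]
    congr 1
    refine Finset.sum_congr rfl fun i _ => ?_
    rcases hω i with h | h <;> simp [s, ofInt, toInt, h]
  have hA : {ω | ∃ t, 1 ≤ t ∧ X t ω = n - 1} =ᵐ[μ]
      {ω | ∃ t, 1 ≤ t ∧ signWalk (s · ω) t = -1} :=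
    Filter.eventuallyEq_set.2 (hwalk.mono fun ω h => by simp [h, sub_eq_add_neg])
  have hB : {ω | ∀ t, 1 ≤ t → t ≤ 2 * m → X t ω ≠ n - 1} =ᵐ[μ]
      {ω | ∀ t, 1 ≤ t → t ≤ 2 * m → signWalk (s · ω) t ≠ -1} :=
    Filter.eventuallyEq_set.2 (hwalk.mono fun ω h => by simp [h, sub_eq_add_neg])
  have hC : 4 * w U * w D = ENNReal.ofReal (4 * p * (1 - p)) := by
    simp only [w, toInt, hneg, hpos]
    rw [ENNReal.ofReal_mul (by positivity), ENNReal.ofReal_mul (by norm_num), ENNReal.ofReal_ofNat]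
    ring
  calc _ = _ := cond_congr_ae hA hB
    _ ≤ (4 * w U * w D) ^ m :=
      cond_noHit_le (fun i => (measurable_of_countable _).comp (hmeas i))
        (hindep.comp _ fun _ => measurable_of_countable _) hw m
    _ ≤ _ := by
      rw [hC, ← ENNReal.ofReal_pow (by nlinarith)]
      exact ENNReal.ofReal_le_ofReal (four_mul_mul_one_sub_pow_le_exp hp0.le hp1.le m)

/-- For the `p`-biased nearest-neighbor random walk on `ℤ` started at `n`
(with `0 < p < 1/2`), letting `τ = inf {t ≥ 1 : X t = n - 1}`, for every integer `m ≥ 1`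
the conditional probability `P(τ ≥ 2m+1 ∣ τ < ∞)` is at most
`exp(−3(1−2p)² m / (2(1+4p)))`.  The event `{τ ≥ 2m+1}` is expressed as the walk not
hitting `n - 1` at any time `1 ≤ t ≤ 2m`, and `{τ < ∞}` as the walk hitting `n - 1` at
some time `t ≥ 1`. -/
theorem stmt0
    {Ω : Type*} [MeasurableSpace Ω] (μ : Measure Ω) [IsProbabilityMeasure μ]
    (p : ℝ) (hp0 : 0 < p) (hp1 : p < 1 / 2)
    (ξ : ℕ → Ω → ℤ)
    (hmeas : ∀ i, Measurable (ξ i))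
    (hindep : iIndepFun ξ μ)
    (hneg : ∀ i, μ {ω | ξ i ω = -1} = ENNReal.ofReal p)
    (hpos : ∀ i, μ {ω | ξ i ω = 1} = ENNReal.ofReal (1 - p))
    (n : ℤ)
    (X : ℕ → Ω → ℤ)
    (hX : ∀ t ω, X t ω = n + ∑ i ∈ Finset.range t, ξ i ω)
    (m : ℕ) (hm : 1 ≤ m) :
    μ[|{ω | ∃ t, 1 ≤ t ∧ X t ω = n - 1}]
        {ω | ∀ t, 1 ≤ t → t ≤ 2 * m → X t ω ≠ n - 1}
      ≤ ENNReal.ofReal (Real.exp (-(3 * (1 - 2 * p) ^ 2 * m) / (2 * (1 + 4 * p)))) :=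
  stmt0_general μ p hp0 hp1 ξ hmeas hindep hneg hpos n X hX m
end

section
/- Let 0 < p < 1/2 and let (X_t) be the p-biased nearest-neighbor random walk on ℤ started at n ∈ ℤ (steps are i.i.d., equal to −1 with probability p and +1 with probability 1−p). Let A = {X_t ≥ n for all t ≥ 0} be the event that the walk never goes left of n, and let T_n = sup{t ≥ 0 : X_t = n} be the time of the last visit to n. Then P(A) > 0, and for every t ≥ 0 the conditional probability P(T_n ≥ t | A) is at most P(T_n ≥ t); that is, the law of the last return time conditioned on A is stochastically dominated by its unconditioned law. -/
/-!
Write `S u = ξ 0 + ⋯ + ξ (u - 1)`. Split `{∃ u ≥ t, S u = 0}` according to the first such `u`.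
The event "the first zero after `t` is at `u`" depends only on `ξ 0, …, ξ (u - 1)`, and on `A`
the walk restarted at such a time `u` again never goes below its starting point. Since the
future `(ξ (u + i))ᵢ` is independent of the past and has the same law as `(ξ i)ᵢ`, the piece
of `A ∩ {T_n ≥ t}` belonging to `u` has probability at most `P(first zero after t is u) · P(A)`;
summing over `u` gives `P(A ∩ {T_n ≥ t}) ≤ P(T_n ≥ t) · P(A)`.

For `P(A) > 0`: by the strong law `S u / u → 1 - 2p > 0`, so the walk is a.s. bounded below and
some `P(S ≥ -k forever)` is positive; prefixing `k` up-steps, of probability `(1 - p) ^ k`, then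
gives a positive lower bound for `P(A)`.
-/

open MeasureTheory ProbabilityTheory Filter Finset Topology

lemma cond_le_of_measure_inter_le_mul {Ω : Type*} {mΩ : MeasurableSpace Ω} {μ : Measure Ω}
    [IsFiniteMeasure μ] {s t : Set Ω} (hs : MeasurableSet s) (h : μ (s ∩ t) ≤ μ s * μ t) :
    μ[|s] t ≤ μ t := by
  rw [cond_apply hs]
  rcases eq_or_ne (μ s) 0 with h0 | h0
  · simp [measure_mono_null Set.inter_subset_left h0]
  · rwa [ENNReal.inv_mul_le_iff h0 (measure_ne_top μ s)]

section Shift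

variable {Ω β : Type*} {mΩ : MeasurableSpace Ω} [mβ : MeasurableSpace β] {μ : Measure Ω}
  {ξ : ℕ → Ω → β}

def shiftPath (ξ : ℕ → Ω → β) (u : ℕ) : Ω → ℕ → β := fun ω i => ξ (u + i) ω

abbrev pastSigma (ξ : ℕ → Ω → β) (u : ℕ) : MeasurableSpace Ω :=
  ⨆ i ∈ Set.Iio u, mβ.comap (ξ i)

lemma measurable_shiftPath (hmeas : ∀ i, Measurable (ξ i)) (u : ℕ) :
    Measurable (shiftPath ξ u) :=
  measurable_pi_lambda _ fun i => hmeas (u + i)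

lemma map_shiftPath (hmeas : ∀ i, Measurable (ξ i)) (hindep : iIndepFun ξ μ)
    (hident : ∀ i, μ.map (ξ i) = μ.map (ξ 0)) (u : ℕ) :
    μ.map (shiftPath ξ u) = μ.map (fun ω i => ξ i ω) := by
  have := hindep.isProbabilityMeasure
  have := Measure.isProbabilityMeasure_map (μ := μ) (hmeas 0).aemeasurable
  have hu := (hindep.precomp (add_right_injective u)).map_fun_eq_infinitePi_map
    fun i => hmeas (u + i)
  have h0 := hindep.map_fun_eq_infinitePi_map hmeas
  simp only [hident] at hu h0
  exact hu.trans h0.symm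

lemma measure_shiftPath_preimage (hmeas : ∀ i, Measurable (ξ i)) (hindep : iIndepFun ξ μ)
    (hident : ∀ i, μ.map (ξ i) = μ.map (ξ 0)) (u : ℕ) {s : Set (ℕ → β)} (hs : MeasurableSet s) :
    μ (shiftPath ξ u ⁻¹' s) = μ ((fun ω i => ξ i ω) ⁻¹' s) := by
  rw [← Measure.map_apply (measurable_shiftPath hmeas u) hs,
    ← Measure.map_apply (measurable_pi_lambda _ hmeas) hs, map_shiftPath hmeas hindep hident]

lemma pastSigma_mono : Monotone (pastSigma ξ) := fun _ _ h =>
  biSup_mono fun _ hi => lt_of_lt_of_le hi h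

lemma pastSigma_le (hmeas : ∀ i, Measurable (ξ i)) (u : ℕ) : pastSigma ξ u ≤ mΩ :=
  iSup₂_le fun i _ => (hmeas i).comap_le

lemma measurable_pastSigma {i u : ℕ} (hi : i < u) : Measurable[pastSigma ξ u] (ξ i) :=
  Measurable.of_comap_le (le_iSup₂ (f := fun i (_ : i ∈ Set.Iio u) => mβ.comap (ξ i)) i hi)

lemma measurable_pastSigma_sum [AddCommMonoid β] [MeasurableAdd₂ β] (u : ℕ) :
    Measurable[pastSigma ξ u] fun ω => ∑ i ∈ range u, ξ i ω := by
  let := pastSigma ξ u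
  exact Finset.measurable_sum _ fun i hi => measurable_pastSigma (mem_range.1 hi)

lemma measure_inter_shiftPath_preimage (hmeas : ∀ i, Measurable (ξ i)) (hindep : iIndepFun ξ μ)
    {u : ℕ} {E : Set Ω} (hE : MeasurableSet[pastSigma ξ u] E) {s : Set (ℕ → β)}
    (hs : MeasurableSet s) :
    μ (E ∩ shiftPath ξ u ⁻¹' s) = μ E * μ (shiftPath ξ u ⁻¹' s) := by
  have hpf := indep_iSup_of_disjoint (fun i => (hmeas i).comap_le)
    ((iIndepFun_iff_iIndep _ _ _).1 hindep) (Set.Iio_disjoint_Ici le_rfl (a := u))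
  have hfuture : Measurable[⨆ i ∈ Set.Ici u, mβ.comap (ξ i)] (shiftPath ξ u) := by
    let : MeasurableSpace Ω := ⨆ i ∈ Set.Ici u, mβ.comap (ξ i)
    exact measurable_pi_lambda _ fun i => Measurable.of_comap_le <|
      le_iSup₂ (f := fun i (_ : i ∈ Set.Ici u) => mβ.comap (ξ i)) (u + i) (by simp)
  exact (Indep_iff _ _ _).1 hpf _ _ hE (hfuture hs)

lemma measure_inter_iUnion_le_mul (hmeas : ∀ i, Measurable (ξ i)) (hindep : iIndepFun ξ μ)
    (hident : ∀ i, μ.map (ξ i) = μ.map (ξ 0)) {A : Set Ω} {Z : ℕ → Set Ω}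
    (hZ : ∀ u, MeasurableSet[pastSigma ξ u] (Z u)) {s : Set (ℕ → β)} (hs : MeasurableSet s)
    (hsub : ∀ u, A ∩ Z u ⊆ shiftPath ξ u ⁻¹' s) :
    μ (A ∩ ⋃ u, Z u) ≤ μ (⋃ u, Z u) * μ ((fun ω i => ξ i ω) ⁻¹' s) := by
  have hD (u : ℕ) : MeasurableSet[pastSigma ξ u] (disjointed Z u) := by
    rw [disjointed_eq_inter_compl]
    exact (hZ u).inter <| .iInter fun j => .iInter fun hj =>
      (pastSigma_mono hj.le _ (hZ j)).compl
  calc μ (A ∩ ⋃ u, Z u)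
      ≤ μ (⋃ u, disjointed Z u ∩ shiftPath ξ u ⁻¹' s) := by
        refine measure_mono ?_
        rw [← iUnion_disjointed, Set.inter_iUnion]
        exact Set.iUnion_mono fun u ω hω =>
          ⟨hω.2, hsub u ⟨hω.1, disjointed_subset Z u hω.2⟩⟩
    _ ≤ ∑' u, μ (disjointed Z u ∩ shiftPath ξ u ⁻¹' s) := measure_iUnion_le _
    _ = ∑' u, μ (disjointed Z u) * μ ((fun ω i => ξ i ω) ⁻¹' s) := by
        refine tsum_congr fun u => ?_
        rw [measure_inter_shiftPath_preimage hmeas hindep (hD u) hs,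
          measure_shiftPath_preimage hmeas hindep hident u hs]
    _ = μ (⋃ u, Z u) * μ ((fun ω i => ξ i ω) ⁻¹' s) := by
        rw [ENNReal.tsum_mul_right, ← measure_iUnion (disjoint_disjointed Z)
          fun u => pastSigma_le hmeas u _ (hD u), iUnion_disjointed]

end Shift

section Walk

variable {Ω : Type*} {mΩ : MeasurableSpace Ω} {μ : Measure Ω} {ξ : ℕ → Ω → ℤ}

def staysAbove (c : ℤ) : Set (ℕ → ℤ) := {x | ∀ v, c ≤ ∑ i ∈ range v, x i}

lemma measurableSet_staysAbove (c : ℤ) : MeasurableSet (staysAbove c) := by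
  simp only [staysAbove, Set.ofPred_forall]
  exact .iInter fun v => measurableSet_le measurable_const (by fun_prop)

lemma mem_staysAbove_iff {c : ℤ} {x : ℕ → ℤ} (k : ℕ) :
    x ∈ staysAbove c ↔ (∀ v ≤ k, c ≤ ∑ i ∈ range v, x i) ∧
      (fun i => x (k + i)) ∈ staysAbove (c - ∑ i ∈ range k, x i) := by
  simp only [staysAbove, Set.mem_ofPred_eq]
  constructor
  · intro h
    refine ⟨fun v _ => h v, fun w => ?_⟩
    have := h (k + w)
    rw [sum_range_add] at this
    linarith
  · rintro ⟨hle, hshift⟩ v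
    rcases le_or_gt v k with hv | hv
    · exact hle v hv
    · obtain ⟨w, rfl⟩ := Nat.exists_eq_add_of_le hv.le
      have := hshift w
      rw [sum_range_add]
      linarith

noncomputable def biasedStep (p : ℝ) : Measure ℤ :=
  ENNReal.ofReal p • Measure.dirac (-1) + ENNReal.ofReal (1 - p) • Measure.dirac 1

lemma integrable_biasedStep (p : ℝ) : Integrable (fun z : ℤ => (z : ℝ)) (biasedStep p) :=
  ((integrable_dirac (by simp)).smul_measure ENNReal.ofReal_ne_top).add_measure
    ((integrable_dirac (by simp)).smul_measure ENNReal.ofReal_ne_top)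

lemma integral_biasedStep {p : ℝ} (hp0 : 0 ≤ p) (hp1 : p ≤ 1) :
    ∫ z, (z : ℝ) ∂biasedStep p = 1 - 2 * p := by
  rw [biasedStep, integral_add_measure ((integrable_dirac (by simp)).smul_measure
    ENNReal.ofReal_ne_top) ((integrable_dirac (by simp)).smul_measure ENNReal.ofReal_ne_top)]
  simp [integral_smul_measure, ENNReal.toReal_ofReal hp0,
    ENNReal.toReal_ofReal (sub_nonneg.2 hp1)]
  ring

lemma map_eq_biasedStep [IsProbabilityMeasure μ] {ζ : Ω → ℤ} (hζ : Measurable ζ)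
    {p : ℝ} (hp0 : 0 ≤ p) (hp1 : p ≤ 1) (hneg : μ {ω | ζ ω = -1} = ENNReal.ofReal p)
    (hpos : μ {ω | ζ ω = 1} = ENNReal.ofReal (1 - p)) :
    μ.map ζ = biasedStep p := by
  refine Measure.ext_of_singleton fun z => ?_
  rw [Measure.map_apply hζ (measurableSet_singleton z)]
  by_cases hz1 : z = -1
  · subst hz1; simp [biasedStep, Set.preimage, hneg]
  by_cases hz2 : z = 1
  · subst hz2; simp [biasedStep, Set.preimage, hpos]
  have hdisj {a b : ℤ} (h : a ≠ b) : Disjoint (ζ ⁻¹' {a}) (ζ ⁻¹' {b}) :=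
    (Set.disjoint_singleton.2 h).preimage ζ
  have hmass : 1 + μ (ζ ⁻¹' {z}) ≤ 1 + 0 := by
    calc 1 + μ (ζ ⁻¹' {z}) = μ (ζ ⁻¹' {-1} ∪ ζ ⁻¹' {1} ∪ ζ ⁻¹' {z}) := by
          rw [measure_union (Set.disjoint_union_left.2
              ⟨hdisj (Ne.symm hz1), hdisj (Ne.symm hz2)⟩) (hζ (measurableSet_singleton z)),
            measure_union (hdisj (by decide))
            (hζ (measurableSet_singleton 1))]
          change 1 + _ = μ {ω | ζ ω = -1} + μ {ω | ζ ω = 1} + _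
          rw [hneg, hpos, ← ENNReal.ofReal_add hp0 (by linarith)]
          simp
      _ ≤ 1 + 0 := by simpa using prob_le_one
  have hzero := le_antisymm (ENNReal.le_of_add_le_add_left ENNReal.one_ne_top hmass) zero_le
  simp [biasedStep, hzero, Measure.dirac_apply', hz1, hz2]

lemma ae_tendsto_sum_range_div (hmeas : ∀ i, Measurable (ξ i)) (hindep : iIndepFun ξ μ) {p : ℝ}
    (hp0 : 0 ≤ p) (hp1 : p ≤ 1) (hlaw : ∀ i, μ.map (ξ i) = biasedStep p) :
    ∀ᵐ ω ∂μ, Tendsto (fun n : ℕ => ((∑ i ∈ range n, ξ i ω : ℤ) : ℝ) / n) atTop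
      (𝓝 (1 - 2 * p)) := by
  have hident (i : ℕ) : IdentDistrib (fun ω => (ξ i ω : ℝ)) (fun ω => (ξ 0 ω : ℝ)) μ μ :=
    (IdentDistrib.mk (hmeas i).aemeasurable (hmeas 0).aemeasurable
      ((hlaw i).trans (hlaw 0).symm)).comp measurable_from_top
  have hint : Integrable (fun ω => (ξ 0 ω : ℝ)) μ :=
    (integrable_map_measure (by fun_prop) (hmeas 0).aemeasurable).1
      (by rw [hlaw 0]; exact integrable_biasedStep p)
  have hmean : ∫ ω, (ξ 0 ω : ℝ) ∂μ = 1 - 2 * p := by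
    rw [← integral_biasedStep hp0 hp1, ← hlaw 0,
      integral_map (hmeas 0).aemeasurable (by fun_prop)]
  filter_upwards [strong_law_ae_real (fun i ω => (ξ i ω : ℝ)) hint
    (fun i j hij => (hindep.indepFun hij).comp measurable_from_top measurable_from_top)
    hident] with ω hω
  simpa [hmean] using hω

lemma bddBelow_range_of_tendsto_div_pos {S : ℕ → ℤ} {m : ℝ} (hm : 0 < m)
    (h : Tendsto (fun n : ℕ => (S n : ℝ) / n) atTop (𝓝 m)) : BddBelow (Set.range S) := by
  refine (isBoundedUnder_of_eventually_ge (a := 0) ?_).bddBelow_range_of_cofinite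
  rw [Nat.cofinite_eq_atTop]
  filter_upwards [h.eventually (eventually_gt_nhds hm)] with n hn
  by_contra! hneg
  exact (div_nonpos_of_nonpos_of_nonneg (Int.cast_nonpos.2 hneg.le) n.cast_nonneg).not_gt hn

lemma exists_measure_staysAbove_pos [IsProbabilityMeasure μ]
    (hbdd : ∀ᵐ ω ∂μ, BddBelow (Set.range fun v => ∑ i ∈ range v, ξ i ω)) :
    ∃ k : ℕ, 0 < μ ((fun ω i => ξ i ω) ⁻¹' staysAbove (-k)) := by
  by_contra! h
  have hnull : ∀ᵐ ω ∂μ, ω ∉ ⋃ k : ℕ, (fun ω i => ξ i ω) ⁻¹' staysAbove (-k) :=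
    measure_eq_zero_iff_ae_notMem.1 (measure_iUnion_null fun k => nonpos_iff_eq_zero.1 (h k))
  obtain ⟨ω, ⟨b, hb⟩, hω⟩ := (hbdd.and hnull).exists
  refine hω (Set.mem_iUnion.2 ⟨(-b).toNat, fun v => ?_⟩)
  have := hb (Set.mem_range_self v)
  show -((-b).toNat : ℤ) ≤ ∑ i ∈ range v, ξ i ω
  omega

lemma measure_staysAbove_pos (hmeas : ∀ i, Measurable (ξ i)) (hindep : iIndepFun ξ μ) {p : ℝ}
    (hp0 : 0 ≤ p) (hp1 : p < 1 / 2) (hlaw : ∀ i, μ.map (ξ i) = biasedStep p) :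
    0 < μ ((fun ω i => ξ i ω) ⁻¹' staysAbove 0) := by
  have := hindep.isProbabilityMeasure
  obtain ⟨k, hk⟩ := exists_measure_staysAbove_pos (μ := μ) <|
    (ae_tendsto_sum_range_div hmeas hindep hp0 (by linarith) hlaw).mono fun ω hω =>
      bddBelow_range_of_tendsto_div_pos (by linarith) hω
  set ones := ⋂ i ∈ range k, ξ i ⁻¹' {1}
  have hones_meas : MeasurableSet[pastSigma ξ k] ones :=
    .iInter fun i => .iInter fun hi =>
      measurable_pastSigma (mem_range.1 hi) (measurableSet_singleton 1)
  have hones : μ ones = ENNReal.ofReal (1 - p) ^ k := by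
    rw [hindep.measure_inter_preimage_eq_mul _ fun _ _ => measurableSet_singleton 1]
    simp [← Measure.map_apply (hmeas _) (measurableSet_singleton _), hlaw, biasedStep]
  have hsub :
      ones ∩ shiftPath ξ k ⁻¹' staysAbove (-k) ⊆ (fun ω i => ξ i ω) ⁻¹' staysAbove 0 := by
    rintro ω ⟨hω1, hω2⟩
    simp only [ones, Set.mem_iInter, Set.mem_preimage, Set.mem_singleton_iff] at hω1
    have hsum (v : ℕ) (hv : v ≤ k) : ∑ i ∈ range v, ξ i ω = v := by
      rw [sum_congr rfl fun i hi => hω1 i (mem_range.2 ((mem_range.1 hi).trans_le hv))]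
      simp
    refine (mem_staysAbove_iff (x := fun i => ξ i ω) k).2 ⟨fun v hv => by simp [hsum v hv], ?_⟩
    rw [hsum k le_rfl, zero_sub]
    exact hω2
  calc 0 < μ ones * μ ((fun ω i => ξ i ω) ⁻¹' staysAbove (-k)) :=
        ENNReal.mul_pos (hones ▸ pow_ne_zero _ (ENNReal.ofReal_pos.2 (by linarith)).ne') hk.ne'
    _ = μ (ones ∩ shiftPath ξ k ⁻¹' staysAbove (-k)) := by
        rw [measure_inter_shiftPath_preimage hmeas hindep hones_meas (measurableSet_staysAbove _),
          measure_shiftPath_preimage hmeas hindep (fun i => (hlaw i).trans (hlaw 0).symm) k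
            (measurableSet_staysAbove _)]
    _ ≤ _ := measure_mono hsub

end Walk

/-- For the `p`-biased nearest-neighbor random walk on `ℤ` started at `n`
(with `0 < p < 1/2`), let `A = {∀ t, X t ≥ n}` be the event that the walk never goes
left of `n`, and let `T_n = sup {t : X t = n}` be the time of the last visit to `n`.
Then `P(A) > 0` and for every `t ≥ 0` the conditional probability `P(T_n ≥ t ∣ A)` is at
most `P(T_n ≥ t)` (the event `{T_n ≥ t}` being that the walk visits `n` at some time
`u ≥ t`); i.e. the conditioned last-return time is stochastically dominated by the
unconditioned one. -/
theorem stmt6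
    {Ω : Type*} [MeasurableSpace Ω] (μ : Measure Ω) [IsProbabilityMeasure μ]
    (p : ℝ) (hp0 : 0 < p) (hp1 : p < 1 / 2)
    (ξ : ℕ → Ω → ℤ)
    (hmeas : ∀ i, Measurable (ξ i))
    (hindep : iIndepFun ξ μ)
    (hneg : ∀ i, μ {ω | ξ i ω = -1} = ENNReal.ofReal p)
    (hpos : ∀ i, μ {ω | ξ i ω = 1} = ENNReal.ofReal (1 - p))
    (n : ℤ)
    (X : ℕ → Ω → ℤ)
    (hX : ∀ t ω, X t ω = n + ∑ i ∈ Finset.range t, ξ i ω) :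
    0 < μ {ω | ∀ t, n ≤ X t ω} ∧
    ∀ t : ℕ,
      μ[|{ω | ∀ u, n ≤ X u ω}] {ω | ∃ u, t ≤ u ∧ X u ω = n}
        ≤ μ {ω | ∃ u, t ≤ u ∧ X u ω = n} := by
  have hlaw (i : ℕ) : μ.map (ξ i) = biasedStep p :=
    map_eq_biasedStep (hmeas i) hp0.le (by linarith) (hneg i) (hpos i)
  have hA : {ω | ∀ t, n ≤ X t ω} = (fun ω i => ξ i ω) ⁻¹' staysAbove 0 := by
    ext ω
    simp [staysAbove, hX]
  refine ⟨hA ▸ measure_staysAbove_pos hmeas hindep hp0.le hp1 hlaw, fun t => ?_⟩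
  have hB : {ω | ∃ u, t ≤ u ∧ X u ω = n} = ⋃ u, {ω | t ≤ u ∧ ∑ i ∈ range u, ξ i ω = 0} := by
    ext ω
    simp [hX]
  rw [hA, hB]
  refine cond_le_of_measure_inter_le_mul
    (measurable_pi_lambda _ hmeas (measurableSet_staysAbove 0)) ?_
  rw [mul_comm]
  refine measure_inter_iUnion_le_mul hmeas hindep (fun i => (hlaw i).trans (hlaw 0).symm)
    (fun u => ?_) (measurableSet_staysAbove 0) fun u ω ⟨hω, _, hzero⟩ => ?_
  · by_cases htu : t ≤ u
    · simp only [htu, true_and]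
      exact measurable_pastSigma_sum u (measurableSet_singleton 0)
    · simp [htu]
  · have h := ((mem_staysAbove_iff (x := fun i => ξ i ω) u).1 hω).2
    rw [hzero, sub_zero] at h
    exact h
end

section
/- Let a, b ∈ (0,1]. Let N be a random variable with the geometric distribution Geo(a) and let (X_i)_{i≥1} be i.i.d. random variables with distribution Geo(b), with N and (X_i) all independent. Set S = X_1 + ⋯ + X_N (with S = 0 when N = 0). Then for every integer m ≥ 0, P(S ≥ m) ≤ (1−ab)^m; that is, S is stochastically dominated by a Geo(ab) random variable. -/
/-!
Conditionally on `N = n`, the sum `S` is a sum of `n` i.i.d. `Geo(b)` variables, hence negative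
binomial: `P(X₁ + ⋯ + Xₙ = k) = multichoose n k · bⁿ (1 - b)ᵏ`. Averaging over `N` with the series
`∑ₙ (n + k).choose k · tⁿ = (1 - t)^-(k+1)` shows that `S` is a zero-modified geometric variable:
`P(S = k) = (1 - a) rᵏ (1 - r)` for `k ≥ 1`, where `r = (1 - b) / (1 - (1 - a) b)`.
Hence `P(S ≥ m) = (1 - a) rᵐ` for `m ≥ 1`, and `r ≤ 1 - ab`.
-/

open MeasureTheory ProbabilityTheory Finset

lemma Nat.sum_range_succ_multichoose (n K : ℕ) :
    ∑ j ∈ range (K + 1), n.multichoose j = (n + 1).multichoose K := by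
  induction K with
  | zero => simp
  | succ K ih => rw [sum_range_succ, ih, Nat.multichoose_succ_succ, add_comm]

lemma ENNReal.tsum_ofReal_eq_of_hasSum {ι : Type*} {f : ι → ℝ} {x : ℝ} (hf : ∀ i, 0 ≤ f i)
    (h : HasSum f x) : ∑' i, ENNReal.ofReal (f i) = ENNReal.ofReal x := by
  rw [← ENNReal.ofReal_tsum_of_nonneg hf h.summable, h.tsum_eq]

section Masses

def negBinomialMass (b : ℝ) (n k : ℕ) : ℝ := n.multichoose k * b ^ n * (1 - b) ^ k

lemma negBinomialMass_nonneg {b : ℝ} (hb0 : 0 ≤ b) (hb1 : b ≤ 1) (n k : ℕ) :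
    0 ≤ negBinomialMass b n k := by
  have : 0 ≤ 1 - b := sub_nonneg.2 hb1
  unfold negBinomialMass
  positivity

lemma negBinomialMass_succ (b : ℝ) (n K : ℕ) :
    negBinomialMass b (n + 1) K
      = ∑ p ∈ antidiagonal K, negBinomialMass b n p.1 * (b * (1 - b) ^ p.2) := by
  have hterm : ∀ p ∈ antidiagonal K, negBinomialMass b n p.1 * (b * (1 - b) ^ p.2)
      = n.multichoose p.1 * (b ^ (n + 1) * (1 - b) ^ K) := by
    intro p hp
    rw [← mem_antidiagonal.1 hp, negBinomialMass]
    ring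
  rw [sum_congr rfl hterm, ← sum_mul, ← Nat.cast_sum, Nat.sum_antidiagonal_eq_sum_range_succ_mk,
    Nat.sum_range_succ_multichoose, negBinomialMass, mul_assoc]

noncomputable def compoundGeometricRatio (a b : ℝ) : ℝ := (1 - b) / (1 - (1 - a) * b)

variable {a b : ℝ}

lemma hasSum_geometric_mul_negBinomialMass (hab : ‖(1 - a) * b‖ < 1) {K : ℕ} (hK : K ≠ 0) :
    HasSum (fun n => a * (1 - a) ^ n * negBinomialMass b n K)
      ((1 - a) * compoundGeometricRatio a b ^ K * (1 - compoundGeometricRatio a b)) := by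
  have hc : 1 - (1 - a) * b ≠ 0 := by
    intro h
    rw [← sub_eq_zero.1 h, norm_one] at hab
    exact lt_irrefl _ hab
  have hshift : ∀ j : ℕ, a * (1 - a) ^ (j + 1) * negBinomialMass b (j + 1) K
      = a * (1 - a) * b * (1 - b) ^ K * ((j + K).choose K * ((1 - a) * b) ^ j) := by
    intro j
    rw [negBinomialMass, Nat.multichoose_eq, show j + 1 + K - 1 = j + K by omega, mul_pow]
    ring
  have h := (hasSum_choose_mul_geometric_of_norm_lt_one K hab).mul_left
    (a * (1 - a) * b * (1 - b) ^ K)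
  simp_rw [← hshift] at h
  have hzero : ∑ n ∈ range 1, a * (1 - a) ^ n * negBinomialMass b n K = 0 := by
    obtain ⟨K, rfl⟩ := Nat.exists_eq_succ_of_ne_zero hK
    simp [negBinomialMass]
  have hvalue : (1 - a) * compoundGeometricRatio a b ^ K * (1 - compoundGeometricRatio a b)
      = a * (1 - a) * b * (1 - b) ^ K * (1 / (1 - (1 - a) * b) ^ (K + 1)) := by
    rw [compoundGeometricRatio, div_pow]
    field_simp
    ring
  have h1 := (hasSum_nat_add_iff (f := fun n => a * (1 - a) ^ n * negBinomialMass b n K) 1).1 h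
  rwa [hzero, add_zero, ← hvalue] at h1

lemma one_sub_one_sub_mul_pos (ha : 0 < a) (hb0 : 0 < b) (hb1 : b ≤ 1) :
    0 < 1 - (1 - a) * b := by
  nlinarith [mul_pos ha hb0]

lemma compoundGeometricRatio_nonneg (ha : 0 < a) (hb0 : 0 < b) (hb1 : b ≤ 1) :
    0 ≤ compoundGeometricRatio a b :=
  div_nonneg (sub_nonneg.2 hb1) (one_sub_one_sub_mul_pos ha hb0 hb1).le

lemma compoundGeometricRatio_lt_one (ha : 0 < a) (hb0 : 0 < b) (hb1 : b ≤ 1) :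
    compoundGeometricRatio a b < 1 := by
  rw [compoundGeometricRatio, div_lt_one (one_sub_one_sub_mul_pos ha hb0 hb1)]
  nlinarith

lemma compoundGeometricRatio_le (ha0 : 0 < a) (ha1 : a ≤ 1) (hb0 : 0 < b) (hb1 : b ≤ 1) :
    compoundGeometricRatio a b ≤ 1 - a * b := by
  rw [compoundGeometricRatio, div_le_iff₀ (one_sub_one_sub_mul_pos ha0 hb0 hb1)]
  nlinarith [mul_nonneg (mul_nonneg ha0.le (mul_self_nonneg b)) (sub_nonneg.2 ha1)]

end Masses

section Distributions

variable {Ω : Type*} [MeasurableSpace Ω] {μ : Measure Ω}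

lemma measure_le_eq_tsum_measure_eq {T : Ω → ℕ} (hT : Measurable T) (m : ℕ) :
    μ {ω | m ≤ T ω} = ∑' k, μ {ω | T ω = m + k} := by
  have hunion : {ω | m ≤ T ω} = ⋃ k, {ω | T ω = m + k} := by
    ext ω
    simp only [Set.mem_ofPred_eq, Set.mem_iUnion]
    exact ⟨fun h => ⟨T ω - m, by omega⟩, fun ⟨k, hk⟩ => by omega⟩
  rw [hunion, measure_iUnion]
  · exact fun i j hij => Set.disjoint_left.2 fun ω hi hj => hij (by simp_all)
  · exact fun k => hT (measurableSet_singleton _)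

lemma ProbabilityTheory.IndepFun.measure_add_eq {U V : Ω → ℕ} (h : IndepFun U V μ)
    (hU : Measurable U) (hV : Measurable V) (K : ℕ) :
    μ {ω | U ω + V ω = K} = ∑ p ∈ antidiagonal K, μ {ω | U ω = p.1} * μ {ω | V ω = p.2} := by
  have hunion : {ω | U ω + V ω = K}
      = ⋃ p ∈ antidiagonal K, {ω | U ω = p.1} ∩ {ω | V ω = p.2} := by
    ext ω
    simp
  rw [hunion, measure_biUnion_finset]
  · exact sum_congr rfl fun p _ => h.measure_inter_preimage_eq_mul _ _
      (measurableSet_singleton p.1) (measurableSet_singleton p.2)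
  · intro p _ q _ hpq
    refine Set.disjoint_left.2 fun ω hp hq => hpq ?_
    simp_all [Prod.ext_iff]
  · exact fun p _ => (hU (measurableSet_singleton _)).inter (hV (measurableSet_singleton _))

lemma measurable_randomIndex {β : Type*} [MeasurableSpace β] {N : Ω → ℕ} {T : ℕ → Ω → β}
    (hN : Measurable N) (hT : ∀ n, Measurable (T n)) : Measurable fun ω => T (N ω) ω :=
  (measurable_from_prod_countable_left (f := fun p : Ω × ℕ => T p.2 p.1) hT).comp
    (measurable_id.prodMk hN)

lemma measure_randomIndex_mem_eq_tsum {β : Type*} [MeasurableSpace β] {N : Ω → ℕ}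
    {T : ℕ → Ω → β} (hN : Measurable N) (hT : ∀ n, Measurable (T n))
    (hindep : ∀ n, IndepFun (T n) N μ) {s : Set β} (hs : MeasurableSet s) :
    μ {ω | T (N ω) ω ∈ s} = ∑' n, μ {ω | N ω = n} * μ {ω | T n ω ∈ s} := by
  have hunion : {ω | T (N ω) ω ∈ s} = ⋃ n, {ω | N ω = n} ∩ {ω | T n ω ∈ s} := by
    ext ω
    simp
  rw [hunion, measure_iUnion]
  · refine tsum_congr fun n => ?_
    rw [Set.inter_comm, mul_comm]
    exact (hindep n).measure_inter_preimage_eq_mul _ _ hs (measurableSet_singleton n)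
  · exact fun i j hij => Set.disjoint_left.2 fun ω hi hj => hij (hi.1.symm.trans hj.1)
  · exact fun n => (hN (measurableSet_singleton n)).inter (hT n hs)

lemma indepFun_sum_range_of_iIndepFun {β : Type*} [MeasurableSpace β] [AddCommMonoid β]
    [MeasurableAdd₂ β] {N : Ω → β} {X : ℕ → Ω → β} (hN : Measurable N)
    (hX : ∀ i, Measurable (X i)) (hindep : iIndepFun (fun i : Option ℕ => Option.elim i N X) μ)
    {n : ℕ} {i : Option ℕ} (hi : ∀ j < n, i ≠ some j) :
    IndepFun (fun ω => ∑ j ∈ range n, X j ω) (Option.elim i N X) μ := by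
  have h := hindep.indepFun_finsetSum_of_notMem (s := (range n).map .some)
    (fun j => by cases j <;> simp [hN, hX]) (by simpa [eq_comm] using hi)
  simpa [sum_map, Finset.sum_fn] using h

lemma measure_sum_range_eq_negBinomialMass [IsProbabilityMeasure μ] {X : ℕ → Ω → ℕ} {b : ℝ}
    (hb0 : 0 ≤ b) (hb1 : b ≤ 1) (hX : ∀ i, Measurable (X i))
    (hindep : ∀ n, IndepFun (fun ω => ∑ i ∈ range n, X i ω) (X n) μ)
    (hgeo : ∀ i k, μ {ω | X i ω = k} = ENNReal.ofReal (b * (1 - b) ^ k)) (n k : ℕ) :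
    μ {ω | ∑ i ∈ range n, X i ω = k} = ENNReal.ofReal (negBinomialMass b n k) := by
  induction n generalizing k with
  | zero => cases k <;> simp [negBinomialMass]
  | succ n ih =>
    simp_rw [sum_range_succ]
    rw [(hindep n).measure_add_eq (by fun_prop) (hX n), negBinomialMass_succ,
      ENNReal.ofReal_sum_of_nonneg fun p _ => mul_nonneg (negBinomialMass_nonneg hb0 hb1 _ _)
        (mul_nonneg hb0 (pow_nonneg (sub_nonneg.2 hb1) _))]
    refine sum_congr rfl fun p _ => ?_
    rw [ih, hgeo, ENNReal.ofReal_mul (negBinomialMass_nonneg hb0 hb1 _ _)]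

theorem measure_sum_range_randomIndex_eq [IsProbabilityMeasure μ] {a b : ℝ} (ha0 : 0 < a)
    (ha1 : a ≤ 1) (hb0 : 0 < b) (hb1 : b ≤ 1) {N : Ω → ℕ} {X : ℕ → Ω → ℕ}
    (hNmeas : Measurable N) (hXmeas : ∀ i, Measurable (X i))
    (hindep : iIndepFun (fun i : Option ℕ => Option.elim i N X) μ)
    (hN : ∀ k, μ {ω | N ω = k} = ENNReal.ofReal (a * (1 - a) ^ k))
    (hXgeo : ∀ i k, μ {ω | X i ω = k} = ENNReal.ofReal (b * (1 - b) ^ k)) {K : ℕ} (hK : K ≠ 0) :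
    μ {ω | ∑ i ∈ range (N ω), X i ω = K}
      = ENNReal.ofReal ((1 - a) * compoundGeometricRatio a b ^ K
          * (1 - compoundGeometricRatio a b)) := by
  have hab : ‖(1 - a) * b‖ < 1 := by
    rw [Real.norm_eq_abs, abs_of_nonneg (mul_nonneg (sub_nonneg.2 ha1) hb0.le)]
    linarith [one_sub_one_sub_mul_pos ha0 hb0 hb1]
  have hgeoN : ∀ n, 0 ≤ a * (1 - a) ^ n := fun n => mul_nonneg ha0.le (pow_nonneg (by linarith) n)
  have hpartial : ∀ n, μ {ω | ∑ i ∈ range n, X i ω = K} = ENNReal.ofReal (negBinomialMass b n K) :=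
    fun n => measure_sum_range_eq_negBinomialMass hb0.le hb1 hXmeas
      (fun n => indepFun_sum_range_of_iIndepFun hNmeas hXmeas hindep (i := some n)
        fun j hj => by simpa using hj.ne') hXgeo n K
  refine (measure_randomIndex_mem_eq_tsum (T := fun n ω => ∑ i ∈ range n, X i ω) hNmeas
    (fun n => by fun_prop) (fun n => indepFun_sum_range_of_iIndepFun hNmeas hXmeas hindep
      (i := none) (by simp)) (measurableSet_singleton K)).trans ?_
  simp_rw [Set.mem_singleton_iff, hN, hpartial, ← ENNReal.ofReal_mul (hgeoN _)]
  exact ENNReal.tsum_ofReal_eq_of_hasSum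
    (fun n => mul_nonneg (hgeoN n) (negBinomialMass_nonneg hb0.le hb1 _ _))
    (hasSum_geometric_mul_negBinomialMass hab hK)

theorem measure_le_sum_range_randomIndex_eq [IsProbabilityMeasure μ] {a b : ℝ} (ha0 : 0 < a)
    (ha1 : a ≤ 1) (hb0 : 0 < b) (hb1 : b ≤ 1) {N : Ω → ℕ} {X : ℕ → Ω → ℕ}
    (hNmeas : Measurable N) (hXmeas : ∀ i, Measurable (X i))
    (hindep : iIndepFun (fun i : Option ℕ => Option.elim i N X) μ)
    (hN : ∀ k, μ {ω | N ω = k} = ENNReal.ofReal (a * (1 - a) ^ k))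
    (hXgeo : ∀ i k, μ {ω | X i ω = k} = ENNReal.ofReal (b * (1 - b) ^ k)) {m : ℕ} (hm : m ≠ 0) :
    μ {ω | m ≤ ∑ i ∈ range (N ω), X i ω}
      = ENNReal.ofReal ((1 - a) * compoundGeometricRatio a b ^ m) := by
  set r := compoundGeometricRatio a b
  have hr0 : 0 ≤ r := compoundGeometricRatio_nonneg ha0 hb0 hb1
  have hr1 : r < 1 := compoundGeometricRatio_lt_one ha0 hb0 hb1
  have htail : HasSum (fun k => (1 - a) * r ^ (m + k) * (1 - r)) ((1 - a) * r ^ m) := by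
    have h := (hasSum_geometric_of_lt_one hr0 hr1).mul_left ((1 - a) * r ^ m * (1 - r))
    rw [mul_inv_cancel_right₀ (sub_ne_zero.2 hr1.ne')] at h
    have hterm : (fun k => (1 - a) * r ^ m * (1 - r) * r ^ k)
        = fun k => (1 - a) * r ^ (m + k) * (1 - r) := funext fun k => by ring
    rwa [hterm] at h
  have hpmf : ∀ k, μ {ω | ∑ i ∈ range (N ω), X i ω = m + k}
      = ENNReal.ofReal ((1 - a) * r ^ (m + k) * (1 - r)) := fun k =>
    measure_sum_range_randomIndex_eq ha0 ha1 hb0 hb1 hNmeas hXmeas hindep hN hXgeo (by omega)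
  rw [measure_le_eq_tsum_measure_eq (measurable_randomIndex (T := fun n ω => ∑ i ∈ range n, X i ω)
    hNmeas fun n => by fun_prop), tsum_congr hpmf]
  exact ENNReal.tsum_ofReal_eq_of_hasSum
    (fun k => mul_nonneg (mul_nonneg (by linarith) (pow_nonneg hr0 _)) (by linarith)) htail

end Distributions

/-- Let `a, b ∈ (0,1]`.  Let `N ~ Geo(a)` and let `(X_i)` be i.i.d.
`Geo(b)` random variables, with `N` and the `X_i` all independent (here `Geo(s)` is the
geometric distribution on `ℕ` with `P(Geo(s) = k) = s(1-s)^k`).  Set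
`S = X_1 + ⋯ + X_N` (with `S = 0` when `N = 0`).  Then for every integer `m ≥ 0`,
`P(S ≥ m) ≤ (1 - ab)^m`; that is, `S` is stochastically dominated by `Geo(ab)`. -/
theorem stmt7
    {Ω : Type*} [MeasurableSpace Ω] (μ : Measure Ω) [IsProbabilityMeasure μ]
    (a b : ℝ) (ha0 : 0 < a) (ha1 : a ≤ 1) (hb0 : 0 < b) (hb1 : b ≤ 1)
    (N : Ω → ℕ) (X : ℕ → Ω → ℕ)
    (hNmeas : Measurable N) (hXmeas : ∀ i, Measurable (X i))
    (hindep : iIndepFun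
      (fun i : Option ℕ => Option.elim i N X) μ)
    (hN : ∀ k : ℕ, μ {ω | N ω = k} = ENNReal.ofReal (a * (1 - a) ^ k))
    (hXgeo : ∀ i, ∀ k : ℕ, μ {ω | X i ω = k} = ENNReal.ofReal (b * (1 - b) ^ k))
    (m : ℕ) :
    μ {ω | m ≤ ∑ i ∈ Finset.range (N ω), X i ω}
      ≤ ENNReal.ofReal ((1 - a * b) ^ m) := by
  rcases eq_or_ne m 0 with rfl | hm
  · simp
  rw [measure_le_sum_range_randomIndex_eq ha0 ha1 hb0 hb1 hNmeas hXmeas hindep hN hXgeo hm]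
  refine ENNReal.ofReal_le_ofReal ?_
  have hr0 := compoundGeometricRatio_nonneg ha0 hb0 hb1
  calc (1 - a) * compoundGeometricRatio a b ^ m ≤ compoundGeometricRatio a b ^ m :=
        mul_le_of_le_one_left (pow_nonneg hr0 m) (by linarith)
    _ ≤ (1 - a * b) ^ m := pow_le_pow_left₀ hr0 (compoundGeometricRatio_le ha0 ha1 hb0 hb1) m
end

section
/- Define s(p) = (1−2p)·exp(−3(1−2p)²/(2(1+4p))) and, for q ∈ (0,1], define 𝔮(p,q) = s(p)·q / (1 − (1−s(p))·q²). Then for every fixed q ∈ (0,1], the function p ↦ 𝔮(p,q) is decreasing (antitone) on the interval [0.4950, 0.4975]. -/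
/-!
Write `𝔮(p, q) = φ_q(s(p))` with `φ_q(t) = t q / (1 - (1 - t) q²)`. For `0 < q ≤ 1` the map `φ_q`
is increasing on `t > 0`, since `φ_q(b) - φ_q(a)` has the sign of `(b - a)(1 - q²)`. So it suffices
that `s` is positive and decreasing on the interval. Positivity holds for `p < 1/2`, and
`s'(p) = exp(…) · (12 (1 - 2p)² (1 + p) / (1 + 4p)² - 2)`, which is `≤ 0` as soon as
`6 (1 - 2p)² (1 + p) ≤ (1 + 4p)²`; near `p = 1/2` the left side is tiny.
-/

open Real Set

noncomputable def sFactor (p : ℝ) : ℝ :=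
  (1 - 2 * p) * exp (-(3 * (1 - 2 * p) ^ 2) / (2 * (1 + 4 * p)))

lemma sFactor_pos {p : ℝ} (hp : p < 1 / 2) : 0 < sFactor p :=
  mul_pos (by linarith) (exp_pos _)

lemma hasDerivAt_sFactor {p : ℝ} (hp : 1 + 4 * p ≠ 0) :
    HasDerivAt sFactor
      (exp (-(3 * (1 - 2 * p) ^ 2) / (2 * (1 + 4 * p))) *
        (12 * (1 - 2 * p) ^ 2 * (1 + p) / (1 + 4 * p) ^ 2 - 2)) p := by
  have hu : HasDerivAt (fun p : ℝ => 1 - 2 * p) (-2) p := by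
    simpa using ((hasDerivAt_id p).const_mul (2 : ℝ)).const_sub 1
  have hv : HasDerivAt (fun p : ℝ => 2 * (1 + 4 * p)) 8 p :=
    ((((hasDerivAt_id p).const_mul (4 : ℝ)).const_add 1).const_mul (2 : ℝ)).congr_deriv
      (by norm_num)
  have hnum : HasDerivAt (fun p : ℝ => -(3 * (1 - 2 * p) ^ 2)) (12 * (1 - 2 * p)) p :=
    ((hu.fun_pow 2).const_mul (3 : ℝ)).fun_neg.congr_deriv (by push_cast; ring)
  have hexponent := hnum.div hv (by simpa using hp)
  refine (hu.mul hexponent.exp).congr_deriv ?_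
  generalize exp _ = E
  field_simp
  ring

lemma antitoneOn_sFactor {D : Set ℝ} (hD : Convex ℝ D)
    (h : ∀ p ∈ D, 0 < 1 + 4 * p ∧ 6 * (1 - 2 * p) ^ 2 * (1 + p) ≤ (1 + 4 * p) ^ 2) :
    AntitoneOn sFactor D := by
  have hderiv : ∀ p ∈ D, HasDerivAt sFactor _ p := fun p hp =>
    hasDerivAt_sFactor (h p hp).1.ne'
  refine antitoneOn_of_hasDerivWithinAt_nonpos hD
    (fun p hp => (hderiv p hp).continuousAt.continuousWithinAt)
    (fun p hp => (hderiv p (interior_subset hp)).hasDerivWithinAt) fun p hp => ?_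
  obtain ⟨hp, hsmall⟩ := h p (interior_subset hp)
  have hv : 0 < (1 + 4 * p) ^ 2 := by positivity
  have hratio : 12 * (1 - 2 * p) ^ 2 * (1 + p) / (1 + 4 * p) ^ 2 ≤ 2 := by
    rw [div_le_iff₀ hv]
    linarith
  exact mul_nonpos_of_nonneg_of_nonpos (exp_pos _).le (by linarith)

lemma monotoneOn_mul_div_one_sub_mul_sq {q : ℝ} (hq0 : 0 < q) (hq1 : q ≤ 1) :
    MonotoneOn (fun t => t * q / (1 - (1 - t) * q ^ 2)) (Ioi 0) := by
  intro a (ha : 0 < a) b (hb : 0 < b) hab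
  have hq2 : q ^ 2 ≤ 1 := pow_le_one₀ hq0.le hq1
  have hden : ∀ t : ℝ, 0 < t → 0 < 1 - (1 - t) * q ^ 2 := fun t ht => by
    nlinarith [mul_pos ht (pow_pos hq0 2)]
  rw [div_le_div_iff₀ (hden a ha) (hden b hb)]
  nlinarith [mul_nonneg (mul_nonneg hq0.le (sub_nonneg.2 hq2)) (sub_nonneg.2 hab)]

/-- With `s(p) = (1−2p)·exp(−3(1−2p)²/(2(1+4p)))` and
`𝔮(p,q) = s(p)·q / (1 − (1−s(p))·q²)`, for every fixed `q ∈ (0,1]` the function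
`p ↦ 𝔮(p,q)` is decreasing (antitone) on `[0.4950, 0.4975]`. -/
theorem stmt9
    (s : ℝ → ℝ)
    (hs : ∀ p : ℝ, s p = (1 - 2 * p) * Real.exp (-(3 * (1 - 2 * p) ^ 2) / (2 * (1 + 4 * p))))
    (Q : ℝ → ℝ → ℝ)
    (hQ : ∀ p q : ℝ, Q p q = s p * q / (1 - (1 - s p) * q ^ 2))
    (q : ℝ) (hq0 : 0 < q) (hq1 : q ≤ 1) :
    AntitoneOn (fun p => Q p q) (Set.Icc 0.4950 0.4975) := by
  have hs_eq : s = sFactor := funext hs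
  have hanti : AntitoneOn sFactor (Icc 0.4950 0.4975) :=
    antitoneOn_sFactor (convex_Icc _ _) fun p ⟨h1, h2⟩ => by
      norm_num at h1 h2
      constructor <;> nlinarith
  have hpos : ∀ p ∈ Icc (0.4950 : ℝ) 0.4975, sFactor p ∈ Ioi 0 := fun p hp =>
    sFactor_pos (by norm_num at hp; linarith [hp.2])
  intro p₁ hp₁ p₂ hp₂ h₁₂
  simp only [hQ, hs_eq]
  exact monotoneOn_mul_div_one_sub_mul_sq hq0 hq1 (hpos p₂ hp₂) (hpos p₁ hp₁) (hanti hp₁ hp₂ h₁₂)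
end

section
/- Define s(p) = (1−2p)·exp(−3(1−2p)²/(2(1+4p))) and 𝔮(p,q) = s(p)·q / (1 − (1−s(p))·q²). Then for p = 0.4975 and every q ∈ [0.9999998, 1], one has 𝔮(p,q) ≥ 0.9999. -/
/-! Since `q² ≥ 2q - 1`, the denominator `1 - (1 - s) q²` is at most `s + 2 (1 - q)`, so
`𝔮(p, q) ≥ s q / (s + 2 (1 - q))`. At `p = 0.4975` the exponential factor is close to `1`
(`exp (-x) ≥ 1 - x`), giving `s ≥ 0.0045`, while `1 - q ≤ 2·10⁻⁷`; this makes the bound exceed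
`0.9999`. -/

open Real

theorem div_add_two_mul_one_sub_le_div_one_sub_mul_sq {s q : ℝ} (hs0 : 0 < s) (hs1 : s ≤ 1)
    (hq0 : 0 ≤ q) (hq1 : q ≤ 1) :
    s * q / (s + 2 * (1 - q)) ≤ s * q / (1 - (1 - s) * q ^ 2) := by
  have hden_pos : 0 < 1 - (1 - s) * q ^ 2 := by nlinarith [pow_le_one₀ (n := 2) hq0 hq1]
  have hden_le : 1 - (1 - s) * q ^ 2 ≤ s + 2 * (1 - q) := by nlinarith [sq_nonneg (1 - q)]
  exact div_le_div_of_nonneg_left (by positivity) hden_pos hden_le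

/-- With `s(p) = (1−2p)·exp(−3(1−2p)²/(2(1+4p)))` and
`𝔮(p,q) = s(p)·q / (1 − (1−s(p))·q²)`, for `p = 0.4975` and every
`q ∈ [0.9999998, 1]`, one has `𝔮(p,q) ≥ 0.9999`. -/
theorem stmt10
    (s : ℝ → ℝ)
    (hs : ∀ p : ℝ, s p = (1 - 2 * p) * Real.exp (-(3 * (1 - 2 * p) ^ 2) / (2 * (1 + 4 * p))))
    (Q : ℝ → ℝ → ℝ)
    (hQ : ∀ p q : ℝ, Q p q = s p * q / (1 - (1 - s p) * q ^ 2))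
    (q : ℝ) (hq0 : 0.9999998 ≤ q) (hq1 : q ≤ 1) :
    0.9999 ≤ Q 0.4975 q := by
  have hs_val : s 0.4975 = 0.005 * exp (-(0.000075 / 5.98)) := by
    rw [hs]; norm_num
  have hs_lo : 0.0045 ≤ s 0.4975 := by
    rw [hs_val]; nlinarith [add_one_le_exp (-(0.000075 / 5.98))]
  have hs_hi : s 0.4975 ≤ 1 := by
    rw [hs_val]; nlinarith [exp_le_one_iff.mpr (by norm_num : -(0.000075 / 5.98 : ℝ) ≤ 0)]
  rw [hQ]
  refine le_trans ?_ (div_add_two_mul_one_sub_le_div_one_sub_mul_sq (by linarith) hs_hi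
    (by linarith) hq1)
  rw [le_div_iff₀ (by linarith)]
  nlinarith
end

section
/- For every ρ ∈ [0.98, 0.99] and every 𝔮 ∈ [0.9999, 1], one has 1 − ∏_{k=0}^{50} (1 − (ρ𝔮)^k · 𝔮 · (1−ρ)/2) ≥ 1/(ρ 𝔮³) − 1. -/
/-!
Every factor of the product is at most `1 - 0.0018`: the term `(ρ𝔮)^k 𝔮 (1-ρ)/2` is smallest at
`k = 50`, where it is still at least `0.9798^50 · 0.9999 · 0.005 > 0.0018`. Hence the product is at
most `0.9982^51 < 0.913`, while `1/(ρ𝔮³) - 1 ≤ 1/(0.98 · 0.9999³) - 1 < 0.021`.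
-/

open Finset

theorem prod_one_sub_le_one_sub_pow_card {ι : Type*} {s : Finset ι} {a : ι → ℝ} {c : ℝ}
    (ha : ∀ i ∈ s, c ≤ a i ∧ a i ≤ 1) : ∏ i ∈ s, (1 - a i) ≤ (1 - c) ^ s.card := by
  rw [← prod_const]
  exact prod_le_prod (fun i hi => sub_nonneg.2 (ha i hi).2)
    (fun i hi => sub_le_sub_left (ha i hi).1 1)

theorem pow_le_pow_of_le_of_le_one {x₀ x : ℝ} (h₀ : 0 ≤ x₀) (hx : x₀ ≤ x) (hx₁ : x ≤ 1)
    {k n : ℕ} (hk : k ≤ n) : x₀ ^ n ≤ x ^ k :=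
  (pow_le_pow_left₀ h₀ hx n).trans (pow_le_pow_of_le_one (h₀.trans hx) hx₁ hk)

theorem drift_term_bounds {ρ q : ℝ} (hρ0 : 0.98 ≤ ρ) (hρ1 : ρ ≤ 0.99) (hq0 : 0.9999 ≤ q)
    (hq1 : q ≤ 1) {k : ℕ} (hk : k ≤ 50) :
    0.0018 ≤ (ρ * q) ^ k * q * ((1 - ρ) / 2) ∧ (ρ * q) ^ k * q * ((1 - ρ) / 2) ≤ 1 := by
  have hρq : 0.9798 ≤ ρ * q := by nlinarith
  have hρq1 : ρ * q ≤ 1 := by nlinarith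
  constructor
  · calc (0.0018 : ℝ) ≤ 0.9798 ^ 50 * 0.9999 * ((1 - 0.99) / 2) := by norm_num
      _ ≤ (ρ * q) ^ k * q * ((1 - ρ) / 2) := by
        gcongr
        exact pow_le_pow_of_le_of_le_one (by norm_num) hρq hρq1 hk
  · exact mul_le_one₀ (mul_le_one₀ (pow_le_one₀ (by linarith) hρq1) (by linarith) hq1)
      (by linarith) (by linarith)

/-- For every `ρ ∈ [0.98, 0.99]` and every `𝔮 ∈ [0.9999, 1]`,
`1 − ∏_{k=0}^{50} (1 − (ρ𝔮)^k · 𝔮 · (1−ρ)/2) ≥ 1/(ρ𝔮³) − 1`. -/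
theorem stmt12
    (ρ q : ℝ) (hρ0 : 0.98 ≤ ρ) (hρ1 : ρ ≤ 0.99) (hq0 : 0.9999 ≤ q) (hq1 : q ≤ 1) :
    1 / (ρ * q ^ 3) - 1
      ≤ 1 - ∏ k ∈ Finset.range 51, (1 - (ρ * q) ^ k * q * ((1 - ρ) / 2)) := by
  have hprod : ∏ k ∈ range 51, (1 - (ρ * q) ^ k * q * ((1 - ρ) / 2)) ≤ (1 - 0.0018) ^ 51 := by
    simpa using prod_one_sub_le_one_sub_pow_card fun k hk =>
      drift_term_bounds hρ0 hρ1 hq0 hq1 (Nat.lt_succ_iff.mp (mem_range.mp hk))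
  calc 1 / (ρ * q ^ 3) - 1 ≤ 1 / (0.98 * 0.9999 ^ 3) - 1 := by gcongr
    _ ≤ 1 - (1 - 0.0018) ^ 51 := by norm_num
    _ ≤ _ := by linarith
end
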